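/- arXiv:1802.08718 — 4 statements merged into one kernel-verified Lean document; each statement's English description precedes it below -/
import Mathlib

section
/- In the independent thresholds model, the value of any deterministic sequence of actions (x_t) is at most the value of the best constant policy sup_x r(x)(1-F(x))/(1 - γ(1-F(x))). -/
/-!
Write `q = 1 - F(x)` for the survival probability of an action `x`. The bound defining `V*`
says `r(x) q ≤ V* (1 - γ q)`: the expected reward of a period is at most `V*` times the
discounted survival mass `γ^t ∏_{s<t} q_s` lost in that period. Summing, the losses telescope
to at most the initial mass `1`.
-/

open Finset

section DiscountedSurvival

variable {γ V : ℝ} {a q : ℕ → ℝ}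

theorem discounted_term_le_mul_sub (hγ : 0 ≤ γ) (hq : ∀ t, 0 ≤ q t)
    (hbound : ∀ t, a t * q t ≤ V * (1 - γ * q t)) (t : ℕ) :
    γ ^ t * a t * ∏ s ∈ range (t + 1), q s ≤
      V * (γ ^ t * ∏ s ∈ range t, q s - γ ^ (t + 1) * ∏ s ∈ range (t + 1), q s) := by
  have hmass : 0 ≤ γ ^ t * ∏ s ∈ range t, q s :=
    mul_nonneg (pow_nonneg hγ t) (prod_nonneg fun s _ => hq s)
  calc γ ^ t * a t * ∏ s ∈ range (t + 1), q s
      = (γ ^ t * ∏ s ∈ range t, q s) * (a t * q t) := by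
        rw [prod_range_succ]; ring
    _ ≤ (γ ^ t * ∏ s ∈ range t, q s) * (V * (1 - γ * q t)) :=
        mul_le_mul_of_nonneg_left (hbound t) hmass
    _ = V * (γ ^ t * ∏ s ∈ range t, q s - γ ^ (t + 1) * ∏ s ∈ range (t + 1), q s) := by
        rw [prod_range_succ, pow_succ]; ring

theorem sum_range_discounted_le (hγ : 0 ≤ γ) (hq : ∀ t, 0 ≤ q t) (hV : 0 ≤ V)
    (hbound : ∀ t, a t * q t ≤ V * (1 - γ * q t)) (n : ℕ) :
    ∑ t ∈ range n, γ ^ t * a t * ∏ s ∈ range (t + 1), q s ≤ V := by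
  set mass : ℕ → ℝ := fun t => γ ^ t * ∏ s ∈ range t, q s
  have hmass_nonneg : 0 ≤ mass n := mul_nonneg (pow_nonneg hγ n) (prod_nonneg fun s _ => hq s)
  have hmass_zero : mass 0 = 1 := by simp [mass]
  calc ∑ t ∈ range n, γ ^ t * a t * ∏ s ∈ range (t + 1), q s
      ≤ ∑ t ∈ range n, V * (mass t - mass (t + 1)) :=
        sum_le_sum fun t _ => discounted_term_le_mul_sub hγ hq hbound t
    _ = V * (1 - mass n) := by rw [← mul_sum, sum_range_sub', hmass_zero]
    _ ≤ V := by nlinarith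

theorem tsum_discounted_le (hγ : 0 ≤ γ) (ha : ∀ t, 0 ≤ a t) (hq : ∀ t, 0 ≤ q t) (hV : 0 ≤ V)
    (hbound : ∀ t, a t * q t ≤ V * (1 - γ * q t)) :
    ∑' t, γ ^ t * a t * ∏ s ∈ range (t + 1), q s ≤ V :=
  Real.tsum_le_of_sum_range_le
    (fun t => mul_nonneg (mul_nonneg (pow_nonneg hγ t) (ha t)) (prod_nonneg fun s _ => hq s))
    (sum_range_discounted_le hγ hq hV hbound)

end DiscountedSurvival

theorem one_sub_mul_pos_of_lt_one {γ p : ℝ} (hγ₀ : 0 ≤ γ) (hγ₁ : γ < 1) (hp : p ≤ 1) :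
    0 < 1 - γ * p := by
  nlinarith [mul_le_mul_of_nonneg_left hp hγ₀]

theorem independent_thresholds_dynamic_at_most_constant_general
    (F : ℝ → ℝ) (hF01 : ∀ y, 0 ≤ F y ∧ F y ≤ 1)
    (r : ℝ → ℝ) (hr : ∀ y, 0 ≤ r y)
    (γ : ℝ) (hγ : γ ∈ Set.Ioo (0 : ℝ) 1)
    (Vstar : ℝ)
    (hVub : ∀ y : ℝ, r y * (1 - F y) / (1 - γ * (1 - F y)) ≤ Vstar)
    (x : ℕ → ℝ) :
    (∑' t : ℕ, γ ^ t * r (x t) * ∏ s ∈ Finset.range (t + 1), (1 - F (x s)))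
      ≤ Vstar := by
  have hsurv_nonneg : ∀ y, 0 ≤ 1 - F y := fun y => by linarith [(hF01 y).2]
  have hdenom_pos : ∀ y, 0 < 1 - γ * (1 - F y) := fun y =>
    one_sub_mul_pos_of_lt_one hγ.1.le hγ.2 (by linarith [(hF01 y).1])
  have hVstar_nonneg : 0 ≤ Vstar :=
    (div_nonneg (mul_nonneg (hr 0) (hsurv_nonneg 0)) (hdenom_pos 0).le).trans (hVub 0)
  exact tsum_discounted_le hγ.1.le (fun t => hr (x t)) (fun t => hsurv_nonneg (x t))
    hVstar_nonneg fun t => (div_le_iff₀ (hdenom_pos (x t))).mp (hVub (x t))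

/-- Independent thresholds model: the value of any deterministic sequence of
actions `(x_t)`, namely `∑_t γ^t r(x_t) ∏_{s ≤ t} (1-F(x_s))`, is at most the
value `V*` of the best constant policy, where `V*` is an upper bound for
`r(x)(1-F(x))/(1 - γ(1-F(x)))` over all actions. -/
theorem independent_thresholds_dynamic_at_most_constant
    (F : ℝ → ℝ) (hF01 : ∀ y, 0 ≤ F y ∧ F y ≤ 1)
    (r : ℝ → ℝ) (hr : ∀ y, 0 ≤ r y) (B : ℝ) (hrB : ∀ y, r y ≤ B)
    (γ : ℝ) (hγ : γ ∈ Set.Ioo (0 : ℝ) 1)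
    (Vstar : ℝ)
    (hVub : ∀ y : ℝ, r y * (1 - F y) / (1 - γ * (1 - F y)) ≤ Vstar)
    (hVlub : ∀ W : ℝ, (∀ y : ℝ, r y * (1 - F y) / (1 - γ * (1 - F y)) ≤ W) → Vstar ≤ W)
    (x : ℕ → ℝ) :
    (∑' t : ℕ, γ ^ t * r (x t) * ∏ s ∈ Finset.range (t + 1), (1 - F (x s)))
      ≤ Vstar :=
  independent_thresholds_dynamic_at_most_constant_general F hF01 r hr γ hγ Vstar hVub x
end

section
/- Suppose g : ℝ → [0,1] satisfies g(x) ≥ 1 - F(x - y) for all x (survival probability in the best-case shifted model) and h(x) = 1 - F(x + y) (worst case). If r is L-Lipschitz and nonnegative, then the optimal constant-policy value under survival function h is within 2yL/(1-γ) of the optimal constant-policy value under survival function g, where the constant-policy value with survival function q is sup_x r(x) q(x)/(1-γ). -/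
/-!
Playing `x - 2y` against the worst-case thresholds survives with probability `1 - F(x - y)`,
exactly like playing `x` against the best-case ones, while the Lipschitz reward loses at most
`2yL`. Hence every best-case value is within `2yL` of some worst-case value, and the gap between
the suprema is at most `2yL`; dividing by `1 - γ` gives the claim.
-/

open Set

theorem ciSup_le_ciSup_add_of_forall_exists {α ι ι' : Type*} [ConditionallyCompleteLattice α]
    [Add α] [AddRightMono α] [Nonempty ι] {f : ι → α} {g : ι' → α} {c : α}
    (hg : BddAbove (range g)) (h : ∀ i, ∃ j, f i ≤ g j + c) :
    ⨆ i, f i ≤ (⨆ j, g j) + c :=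
  ciSup_le fun i =>
    let ⟨j, hj⟩ := h i
    hj.trans (add_le_add_left (le_ciSup hg j) c)

theorem mul_le_mul_add_of_abs_sub_le {a b d s : ℝ} (hab : |a - b| ≤ d) (hs0 : 0 ≤ s)
    (hs1 : s ≤ 1) : a * s ≤ b * s + d := by
  have : (a - b) * s ≤ |a - b| :=
    calc (a - b) * s ≤ |a - b| * s := mul_le_mul_of_nonneg_right (le_abs_self _) hs0
      _ ≤ |a - b| := mul_le_of_le_one_right (abs_nonneg _) hs1
  linarith

theorem bddAbove_range_mul_of_le_one {r q : ℝ → ℝ} {B : ℝ} (hr : ∀ z, 0 ≤ r z)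
    (hrB : ∀ z, r z ≤ B) (hq : ∀ z, q z ≤ 1) : BddAbove (range fun x => r x * q x) := by
  refine ⟨B, ?_⟩
  rintro _ ⟨x, rfl⟩
  exact (mul_le_of_le_one_right (hr x) (hq x)).trans (hrB x)

theorem small_noise_constant_policy_gap_general
    (F : ℝ → ℝ) (hF01 : ∀ z, 0 ≤ F z ∧ F z ≤ 1)
    (r : ℝ → ℝ) (hr : ∀ z, 0 ≤ r z) (B : ℝ) (hrB : ∀ z, r z ≤ B)
    (L : ℝ) (hLip : ∀ a b, |r a - r b| ≤ L * |a - b|)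
    (γ : ℝ) (hγ : γ ∈ Set.Ioo (0 : ℝ) 1)
    (y : ℝ) (hy : 0 ≤ y) :
    (⨆ x : ℝ, r x * (1 - F (x - y))) / (1 - γ)
      - (⨆ x : ℝ, r x * (1 - F (x + y))) / (1 - γ)
      ≤ 2 * y * L / (1 - γ) := by
  have hbdd : BddAbove (range fun x => r x * (1 - F (x + y))) :=
    bddAbove_range_mul_of_le_one hr hrB fun z => by linarith [(hF01 (z + y)).1]
  have hshift (x : ℝ) :
      r x * (1 - F (x - y)) ≤ r (x - 2 * y) * (1 - F (x - 2 * y + y)) + 2 * y * L := by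
    have hdist : |r x - r (x - 2 * y)| ≤ 2 * y * L := by
      have hgap : |x - (x - 2 * y)| = 2 * y := by rw [sub_sub_cancel, abs_of_nonneg (by linarith)]
      simpa only [hgap, mul_comm L] using hLip x (x - 2 * y)
    rw [show x - 2 * y + y = x - y by ring]
    exact mul_le_mul_add_of_abs_sub_le hdist (by linarith [(hF01 (x - y)).2])
      (by linarith [(hF01 (x - y)).1])
  have hsup := ciSup_le_ciSup_add_of_forall_exists hbdd fun x => ⟨x - 2 * y, hshift x⟩
  rw [div_sub_div_same]
  exact div_le_div_of_nonneg_right (by linarith) (by linarith [hγ.2])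

/-- Small-noise robustness: with noise in `[-y, y]`, the optimal constant-policy
value in the best-case shifted model (survival probability `1 - F(x - y)`) is
within `2yL/(1-γ)` of that in the worst-case model (survival probability
`1 - F(x + y)`), when `r` is `L`-Lipschitz and nonnegative. -/
theorem small_noise_constant_policy_gap
    (F : ℝ → ℝ) (hFmono : Monotone F) (hF01 : ∀ z, 0 ≤ F z ∧ F z ≤ 1)
    (r : ℝ → ℝ) (hr : ∀ z, 0 ≤ r z) (B : ℝ) (hrB : ∀ z, r z ≤ B)
    (L : ℝ) (hL : 0 ≤ L) (hLip : ∀ a b, |r a - r b| ≤ L * |a - b|)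
    (γ : ℝ) (hγ : γ ∈ Set.Ioo (0 : ℝ) 1)
    (y : ℝ) (hy : 0 ≤ y) :
    (⨆ x : ℝ, r x * (1 - F (x - y))) / (1 - γ)
      - (⨆ x : ℝ, r x * (1 - F (x + y))) / (1 - γ)
      ≤ 2 * y * L / (1 - γ) :=
  small_noise_constant_policy_gap_general F hF01 r hr B hrB L hLip γ hγ y hy
end

section
/- Let v(θ, θ') = Ḡ(x(θ) - θ') r(x(θ)) / (1 - γ Ḡ(x(θ) - θ')) and suppose v is L_v-Lipschitz in its first argument uniformly in the second, v is non-decreasing in θ', and 0 ≤ v ≤ B/(1-γ). If the interval (l, u) is an η-cover for the threshold distribution F (i.e. F(u) - F(l) > 1 - η), then the constant policy at m = (l+u)/2 satisfies V_o - V_θ ≤ L_v (u-l)/2 + 2ηB/(1-γ), where V_o = E_θ[v(θ, θ)] is the oracle value and V_θ = E_θ[v(m, θ)] is the value of the constant policy at m. -/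
open MeasureTheory

/-! Every `θ` in the cover `(l, u)` lies within `(u - l)/2` of the midpoint `m`, so the Lipschitz
bound controls `v(θ, θ) - v(m, θ)` there; off the cover, which has mass below `η`, the gap is at
most the range `B/(1-γ)` of `v`. -/

lemma abs_sub_midpoint_le {l u θ : ℝ} (hθ : θ ∈ Set.Icc l u) : |θ - (l + u) / 2| ≤ (u - l) / 2 :=
  abs_le.2 ⟨by linarith [hθ.1], by linarith [hθ.2]⟩

lemma integral_sub_integral_le_of_abs_sub_le_on_cover {α : Type*} [MeasurableSpace α]
    {μ : Measure α} [IsProbabilityMeasure μ] {f g : α → ℝ} {s : Set α} {C K η : ℝ}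
    (hs : MeasurableSet s) (hf : Integrable f μ) (hg : Integrable g μ) (hC : 0 ≤ C) (hK : 0 ≤ K)
    (hin : ∀ x ∈ s, |f x - g x| ≤ C) (hout : ∀ x ∈ sᶜ, |f x - g x| ≤ K)
    (hcover : 1 - η ≤ μ.real s) :
    ∫ x, f x ∂μ - ∫ x, g x ∂μ ≤ C + K * η := by
  have hin' : ∫ x in s, f x - g x ∂μ ≤ C * μ.real s :=
    (Real.le_norm_self _).trans (norm_setIntegral_le_of_norm_le_const (measure_lt_top μ s) hin)
  have hout' : ∫ x in sᶜ, f x - g x ∂μ ≤ K * μ.real sᶜ :=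
    (Real.le_norm_self _).trans (norm_setIntegral_le_of_norm_le_const (measure_lt_top μ _) hout)
  have hcompl : μ.real sᶜ ≤ η := by
    rw [probReal_compl_eq_one_sub hs]
    linarith
  calc ∫ x, f x ∂μ - ∫ x, g x ∂μ
      = ∫ x in s, f x - g x ∂μ + ∫ x in sᶜ, f x - g x ∂μ := by
        rw [integral_add_compl (f := fun x => f x - g x) hs (hf.sub hg), integral_sub hf hg]
    _ ≤ C * μ.real s + K * μ.real sᶜ := add_le_add hin' hout'
    _ ≤ C * 1 + K * η := by gcongr; exact measureReal_le_one
    _ = C + K * η := by ring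

theorem large_noise_constant_policy_gap_general
    (μ : Measure ℝ) [IsProbabilityMeasure μ]
    (v : ℝ → ℝ → ℝ)
    (B γ Lv η l u : ℝ)
    (hlu : l < u)
    (hLip : ∀ θ s θ' : ℝ, |v θ θ' - v s θ'| ≤ Lv * |θ - s|)
    (hbounds : ∀ θ θ' : ℝ, 0 ≤ v θ θ' ∧ v θ θ' ≤ B / (1 - γ))
    (hcover : 1 - η < (μ (Set.Ioo l u)).toReal)
    (hint₁ : Integrable (fun θ => v θ θ) μ)
    (hint₂ : Integrable (fun θ => v ((l + u) / 2) θ) μ) :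
    (∫ θ, v θ θ ∂μ) - (∫ θ, v ((l + u) / 2) θ ∂μ)
      ≤ Lv * (u - l) / 2 + 2 * η * B / (1 - γ) := by
  rw [← measureReal_def] at hcover
  have hK : 0 ≤ B / (1 - γ) := (hbounds 0 0).1.trans (hbounds 0 0).2
  have hLv : 0 ≤ Lv := by simpa using (abs_nonneg _).trans (hLip 1 0 0)
  have hη : 0 ≤ η := by linarith [measureReal_le_one (μ := μ) (s := Set.Ioo l u)]
  have hgap := integral_sub_integral_le_of_abs_sub_le_on_cover measurableSet_Ioo hint₁ hint₂
    (by positivity : 0 ≤ Lv * (u - l) / 2) hK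
    (fun θ hθ => calc |v θ θ - v ((l + u) / 2) θ|
        ≤ Lv * |θ - (l + u) / 2| := hLip _ _ _
      _ ≤ Lv * ((u - l) / 2) := by gcongr; exact abs_sub_midpoint_le (Set.Ioo_subset_Icc_self hθ)
      _ = Lv * (u - l) / 2 := by ring)
    (fun θ _ => abs_sub_le_of_nonneg_of_le (hbounds θ θ).1 (hbounds θ θ).2
      (hbounds _ θ).1 (hbounds _ θ).2)
    hcover.le
  have hslack : 2 * η * B / (1 - γ) = 2 * (B / (1 - γ) * η) := by ring
  linarith [mul_nonneg hK hη]

/-- Large-noise robustness: if `v(θ, θ')` (the value of the optimal constant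
policy for fixed component `θ` when the true fixed component is `θ'`) is
`L_v`-Lipschitz in its first argument, non-decreasing in its second argument,
takes values in `[0, B/(1-γ)]`, and `(l, u)` is an `η`-cover of the threshold
distribution, then the constant policy at the midpoint `m = (l+u)/2` has value
within `L_v(u-l)/2 + 2ηB/(1-γ)` of the oracle value `V_o = E[v(θ,θ)]`. -/
theorem large_noise_constant_policy_gap
    (μ : Measure ℝ) [IsProbabilityMeasure μ]
    (v : ℝ → ℝ → ℝ)
    (B γ Lv η l u : ℝ)
    (hγ : γ ∈ Set.Ioo (0 : ℝ) 1) (hB : 0 ≤ B) (hLv : 0 ≤ Lv) (hη : 0 ≤ η)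
    (hlu : l < u)
    (hLip : ∀ θ s θ' : ℝ, |v θ θ' - v s θ'| ≤ Lv * |θ - s|)
    (hmono : ∀ θ : ℝ, Monotone (v θ))
    (hbounds : ∀ θ θ' : ℝ, 0 ≤ v θ θ' ∧ v θ θ' ≤ B / (1 - γ))
    (hcover : 1 - η < (μ (Set.Ioo l u)).toReal)
    (hint₁ : Integrable (fun θ => v θ θ) μ)
    (hint₂ : Integrable (fun θ => v ((l + u) / 2) θ) μ) :
    (∫ θ, v θ θ ∂μ) - (∫ θ, v ((l + u) / 2) θ ∂μ)
      ≤ Lv * (u - l) / 2 + 2 * η * B / (1 - γ) :=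
  large_noise_constant_policy_gap_general μ v B γ Lv η l u hlu hLip hbounds hcover hint₁ hint₂
end

section
/- In the geometric-patience feedback model with p = 1 (no abandonment) and known uniform posterior: if the posterior on θ is uniform on [l, u], the constant policy at l yields value r(l)/(1-γ), and for any single-step experiment at action x ∈ (l, u] followed by optimal continuation bounded above by r(u)/(1-γ), the value is at most ((u-x)/(u-l)) (r(x) + γ r(u)/(1-γ)) + ((x-l)/(u-l)) γ r(u)/(1-γ). If r is L_r-Lipschitz and r(l) > 0, then for u - l sufficiently small (depending on u, L_r, γ, r), the constant policy at l is strictly better than any experiment at x with x - l ≥ (u-l)/2. -/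
/-!
Write `d = u - l`; the Lipschitz bound keeps every reward on `[l, u]` within `Lr * d` of `r u`.
The experiment at `x ≥ (l + u) / 2` collects `r x` only when `θ ≥ x`, an event of probability at
most `1/2`, and afterwards earns at most `γ r u / (1 - γ)`. Scaled by `1 - γ`, it is therefore
worth at most `(1 - γ) (r u + Lr d) / 2 + γ r u`, which falls short of `r u - Lr d ≤ r l` as soon
as `(3 - γ) Lr d < (1 - γ) r u`.
-/

theorem tsum_geometric_mul_const {γ : ℝ} (h0 : 0 ≤ γ) (h1 : γ < 1) (c : ℝ) :
    ∑' t : ℕ, γ ^ t * c = c / (1 - γ) := by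
  rw [tsum_mul_right, tsum_geometric_of_lt_one h0 h1, div_eq_inv_mul]

theorem half_add_discounted_lt {γ R ρ m : ℝ} (hγ : γ < 1) (hρ : R - m ≤ ρ)
    (hm : (3 - γ) * m < (1 - γ) * R) :
    (R + m) / 2 + γ * R / (1 - γ) < ρ / (1 - γ) := by
  have h1γ : 0 < 1 - γ := sub_pos.2 hγ
  have hscaled : ((R + m) / 2 + γ * R / (1 - γ)) * (1 - γ) = (1 - γ) * (R + m) / 2 + γ * R := by
    field_simp
  rw [lt_div_iff₀ h1γ, hscaled]
  linarith

section Lipschitz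

variable {r : ℝ → ℝ} {Lr : ℝ} (hLip : ∀ a b, |r a - r b| ≤ Lr * |a - b|)
include hLip

theorem nonneg_of_abs_sub_le_mul : 0 ≤ Lr := by
  simpa using (abs_nonneg _).trans (hLip 1 0)

theorem le_add_mul_of_abs_sub_le_mul {a b l : ℝ} (hla : l ≤ a) (hab : a ≤ b) :
    r a ≤ r b + Lr * (b - l) := by
  have hdist : |a - b| ≤ b - l := by rw [abs_sub_comm, abs_of_nonneg (by linarith)]; linarith
  linarith [le_abs_self (r a - r b), hLip a b,
    mul_le_mul_of_nonneg_left hdist (nonneg_of_abs_sub_le_mul hLip)]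

theorem sub_mul_le_of_abs_sub_le_mul {l u : ℝ} (hlu : l ≤ u) : r u - Lr * (u - l) ≤ r l := by
  have := hLip u l
  rw [abs_of_nonneg (sub_nonneg.2 hlu)] at this
  linarith [le_abs_self (r u - r l)]

theorem experiment_value_le {l u x c : ℝ} (hru : 0 ≤ r u) (hlx : l < x) (hxu : x ≤ u)
    (hhalf : (u - l) / 2 ≤ x - l) :
    ((u - x) / (u - l)) * (r x + c) + ((x - l) / (u - l)) * c
      ≤ (r u + Lr * (u - l)) / 2 + c := by
  have hd : 0 < u - l := by linarith
  have hweights : (u - x) / (u - l) + (x - l) / (u - l) = 1 := by field_simp; ring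
  have hprob_nonneg : 0 ≤ (u - x) / (u - l) := div_nonneg (by linarith) hd.le
  have hprob_le_half : (u - x) / (u - l) ≤ 1 / 2 := by rw [div_le_iff₀ hd]; linarith
  have hrx := le_add_mul_of_abs_sub_le_mul hLip hlx.le hxu
  have hbound_nonneg : 0 ≤ r u + Lr * (u - l) :=
    add_nonneg hru (mul_nonneg (nonneg_of_abs_sub_le_mul hLip) hd.le)
  calc ((u - x) / (u - l)) * (r x + c) + ((x - l) / (u - l)) * c
      = (u - x) / (u - l) * r x + c := by linear_combination c * hweights
    _ ≤ (u - x) / (u - l) * (r u + Lr * (u - l)) + c := by gcongr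
    _ ≤ 1 / 2 * (r u + Lr * (u - l)) + c := by gcongr
    _ = (r u + Lr * (u - l)) / 2 + c := by ring

end Lipschitz

theorem partial_learning_constant_beats_experiment_general
    (r : ℝ → ℝ)
    (Lr : ℝ) (hLip : ∀ a b, |r a - r b| ≤ Lr * |a - b|)
    (γ : ℝ) (hγ : γ ∈ Set.Ioo (0 : ℝ) 1)
    (u : ℝ) (hru : 0 < r u) :
    (∀ l : ℝ, (∑' t : ℕ, γ ^ t * r l) = r l / (1 - γ)) ∧
    ∃ δ : ℝ, 0 < δ ∧
      ∀ l : ℝ, l < u → u - l < δ → 0 < r l →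
        ∀ x : ℝ, l < x → x ≤ u → (u - l) / 2 ≤ x - l →
          ((u - x) / (u - l)) * (r x + γ * r u / (1 - γ))
              + ((x - l) / (u - l)) * (γ * r u / (1 - γ))
            < r l / (1 - γ) := by
  obtain ⟨hγ0, hγ1⟩ := hγ
  have hLr := nonneg_of_abs_sub_le_mul hLip
  have h1γ : 0 < 1 - γ := sub_pos.2 hγ1
  refine ⟨fun l ↦ tsum_geometric_mul_const hγ0.le hγ1 (r l),
    (1 - γ) * r u / (3 * (Lr + 1)), by positivity, ?_⟩
  intro l hlu hδ _ x hlx hxu hhalf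
  have hgap : (3 - γ) * (Lr * (u - l)) < (1 - γ) * r u := by
    have hsmall := (lt_div_iff₀' (by positivity : (0 : ℝ) < 3 * (Lr + 1))).1 hδ
    nlinarith [mul_nonneg hLr (sub_nonneg.2 hlu.le)]
  exact (experiment_value_le hLip hru.le hlx hxu hhalf).trans_lt
    (half_add_discounted_lt hγ1 (sub_mul_le_of_abs_sub_le_mul hLip hlu.le) hgap)

/-- Feedback model with `p = 1` and uniform posterior on `(l, u)`: the constant
policy at `l` has value `r(l)/(1-γ)`, while any one-step experiment at
`x ∈ (l, u]` followed by an optimally continued policy (bounded by `r(u)/(1-γ)`)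
has value at most
`((u-x)/(u-l))(r(x) + γ r(u)/(1-γ)) + ((x-l)/(u-l)) γ r(u)/(1-γ)`.
If `r` is increasing, `L_r`-Lipschitz, nonnegative with `r(u) > 0`, then for
`u - l` sufficiently small, the constant policy at `l` is strictly better than
any experiment at `x` with `x - l ≥ (u-l)/2`. -/
theorem partial_learning_constant_beats_experiment
    (r : ℝ → ℝ) (hr_mono : Monotone r) (hr_nonneg : ∀ z, 0 ≤ r z)
    (Lr : ℝ) (hLr : 0 ≤ Lr) (hLip : ∀ a b, |r a - r b| ≤ Lr * |a - b|)
    (γ : ℝ) (hγ : γ ∈ Set.Ioo (0 : ℝ) 1)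
    (u : ℝ) (hru : 0 < r u) :
    (∀ l : ℝ, (∑' t : ℕ, γ ^ t * r l) = r l / (1 - γ)) ∧
    ∃ δ : ℝ, 0 < δ ∧
      ∀ l : ℝ, l < u → u - l < δ → 0 < r l →
        ∀ x : ℝ, l < x → x ≤ u → (u - l) / 2 ≤ x - l →
          ((u - x) / (u - l)) * (r x + γ * r u / (1 - γ))
              + ((x - l) / (u - l)) * (γ * r u / (1 - γ))
            < r l / (1 - γ) :=
  partial_learning_constant_beats_experiment_general r Lr hLip γ hγ u hru
end
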